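/- arXiv:math/0211395 — 7 statements merged into one kernel-verified Lean document; each statement's English description precedes it below -/
import Mathlib

section
/- The string rewriting system Σ is terminating: there is no infinite sequence of rewriting steps. Specifically, every rewriting rule of Σ strictly decreases words with respect to the lexicographic order induced by the well-ordering x_0 < x_1 < ... < x_n < ... < x_n^{-1} < ... < x_1^{-1} < x_0^{-1} on letters (since rules preserve length, this lexicographic comparison is a well-founded order on words of fixed length). -/
abbrev Letter := ℕ × Bool
abbrev Word := List Letter

def pos (i : ℕ) : Letter := (i, true)
def neg (i : ℕ) : Letter := (i, false)

/-- The rewriting rules of the system Σ. -/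
inductive SigmaRule : Word → Word → Prop
  | cancel (i : ℕ) : SigmaRule [neg i, pos i] [pos i, neg i]
  | negPos (i j : ℕ) (h : i < j) : SigmaRule [neg i, pos j] [pos (j+1), neg i]
  | posNegInv (i j : ℕ) (h : i < j) : SigmaRule [neg j, pos i] [pos i, neg (j+1)]
  | posPos (i j : ℕ) (h : i < j) : SigmaRule [pos j, pos i] [pos i, pos (j+1)]
  | negNeg (i j : ℕ) (h : i < j) : SigmaRule [neg i, neg j] [neg (j+1), neg i]

/-- One rewriting step: replace an occurrence of a left-hand side by the right-hand side. -/
def Step (u v : Word) : Prop :=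
  ∃ a b l r : Word, SigmaRule l r ∧ u = a ++ l ++ b ∧ v = a ++ r ++ b

/-- A word is Σ-irreducible if no rule applies. -/
def SigmaIrreducible (w : Word) : Prop := ∀ v, ¬ Step w v

/-- Maximal subscript occurring in a positive word (0 for the empty word). -/
def mu (l : List ℕ) : ℕ := l.foldr max 0

/-- The order on letters: `x_0 < x_1 < ⋯ < x_n < ⋯ < x_n⁻¹ < ⋯ < x_1⁻¹ < x_0⁻¹`. -/
def ltLetter (a b : Letter) : Prop :=
  (a.2 = true ∧ b.2 = false) ∨
  (a.2 = true ∧ b.2 = true ∧ a.1 < b.1) ∨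
  (a.2 = false ∧ b.2 = false ∧ b.1 < a.1)

/-!
Each rule replaces a two-letter factor by one whose first letter is smaller, so a step decreases
the word lexicographically. That order alone does not give termination, because the negative
letters `x_0⁻¹ > x_1⁻¹ > ⋯` form an infinite descending chain. Instead, a step decreases the
triple formed by the sign pattern of the word (a rule `x_i⁻¹ x_j → x_k x_l⁻¹` moves a positive
letter left), the sequence of indices of positive letters (changed only by `x_j x_i → x_i x_{j+1}`)
and the reversed sequence of indices of negative letters (changed only by
`x_i⁻¹ x_j⁻¹ → x_{j+1}⁻¹ x_i⁻¹`), each compared lexicographically with respect to `<`. On lists of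
a fixed length this agrees with the well-founded shortlex order, so the triple cannot decrease
forever.
-/

open List

theorem List.Shortlex.append_cons {α : Type*} {r : α → α → Prop} (p : List α) {x y : α}
    {s t : List α} (hxy : r x y) (hst : s.length = t.length) :
    Shortlex r (p ++ x :: s) (p ++ y :: t) :=
  (Shortlex.of_lex (by simp [hst]) (Lex.rel hxy)).append_left p

theorem Step.lex_ltLetter {u v : Word} (h : Step u v) : Lex ltLetter v u := by
  obtain ⟨a, b, l, r, hlr, rfl, rfl⟩ := h
  simp only [List.append_assoc]
  refine Lex.append_left _ ?_ a
  cases hlr <;> exact Lex.rel (by simp_all [ltLetter, pos, neg, le_of_lt])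

-- `false < true` in `Bool`, so positive letters are sent to `false`.
def signs (w : Word) : List Bool := w.map fun x => !x.2

def posIndices (w : Word) : List ℕ := (w.filter (·.2)).map Prod.fst

def negIndices (w : Word) : List ℕ := (w.filter (!·.2)).map Prod.fst

def sigmaMeasure (w : Word) : List Bool × List ℕ × List ℕ :=
  (signs w, posIndices w, (negIndices w).reverse)

def MeasureLt : List Bool × List ℕ × List ℕ → List Bool × List ℕ × List ℕ → Prop :=
  Prod.Lex (Shortlex (· < ·)) (Prod.Lex (Shortlex (· < ·)) (Shortlex (· < ·)))

theorem wellFounded_measureLt : WellFounded MeasureLt :=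
  (Shortlex.wf wellFounded_lt).prod_lex ((Shortlex.wf wellFounded_lt).prod_lex
    (Shortlex.wf wellFounded_lt))

theorem Step.measureLt {u v : Word} (h : Step u v) :
    MeasureLt (sigmaMeasure v) (sigmaMeasure u) := by
  obtain ⟨a, b, l, r, hlr, rfl, rfl⟩ := h
  cases hlr with
  | cancel i | negPos i j _ | posNegInv i j _ =>
    apply Prod.Lex.left
    simpa [signs, pos, neg] using Shortlex.append_cons (signs a) (s := true :: signs b)
      (t := false :: signs b) Bool.false_lt_true rfl
  | posPos i j hij =>
    have hsigns : signs (a ++ [pos i, pos (j + 1)] ++ b) = signs (a ++ [pos j, pos i] ++ b) := by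
      simp [signs, pos]
    rw [sigmaMeasure, sigmaMeasure, hsigns]
    refine Prod.Lex.right _ (Prod.Lex.left _ _ ?_)
    simpa [posIndices, pos] using Shortlex.append_cons (posIndices a)
      (s := (j + 1) :: posIndices b) (t := i :: posIndices b) hij rfl
  | negNeg i j hij =>
    have hsigns : signs (a ++ [neg (j + 1), neg i] ++ b) = signs (a ++ [neg i, neg j] ++ b) := by
      simp [signs, neg]
    have hpos : posIndices (a ++ [neg (j + 1), neg i] ++ b) =
        posIndices (a ++ [neg i, neg j] ++ b) := by
      simp [posIndices, neg]
    rw [sigmaMeasure, sigmaMeasure, hsigns, hpos]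
    refine Prod.Lex.right _ (Prod.Lex.right _ ?_)
    simpa [negIndices, neg] using Shortlex.append_cons (negIndices b).reverse
      (s := (j + 1) :: (negIndices a).reverse) (t := i :: (negIndices a).reverse) hij rfl

theorem wellFounded_flip_step : WellFounded (flip Step) :=
  Subrelation.wf Step.measureLt (InvImage.wf sigmaMeasure wellFounded_measureLt)

/-- Every rewriting step strictly decreases words in the lexicographic order induced by
`ltLetter`, and the rewriting system Σ is terminating: there is no infinite sequence of
rewriting steps. -/
theorem sigma_terminating :
    (∀ u v : Word, Step u v → List.Lex ltLetter v u) ∧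
    ¬ ∃ f : ℕ → Word, ∀ k : ℕ, Step (f k) (f (k + 1)) :=
  ⟨fun _ _ h => h.lex_ltLetter,
    fun ⟨f, hf⟩ => (wellFounded_iff_isEmpty_descending_chain.1 wellFounded_flip_step).elim ⟨f, hf⟩⟩
end

section
/- Every word over X has a Σ-irreducible descendant (a standard form): the rewriting system Σ is normalizing, i.e., for every word w there exists a word r irreducible with respect to Σ such that w rewrites to r in finitely many steps. -/
/-!
Normal forms are built by insertion: to normalize `a :: w`, normalize `w` and push `a` in from the
left, rewriting `a` with the next letter as long as a rule applies. A word with no reducible pair of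
adjacent letters is irreducible, and pushing a letter into such a word keeps it so: the right-hand
side of a rule is never reducible, and no reducible pair is created behind the pushed letter as it
moves on (a finite case check).
-/

/-- Σ is deterministic: a pair `[a, b]` is the left-hand side of at most one rule, whose right-hand
side this returns. -/
def rewritePair : Letter → Letter → Option (Letter × Letter)
  | (i, false), (j, true) =>
      if i = j then some (pos i, neg i)
      else if i < j then some (pos (j + 1), neg i)
      else some (pos j, neg (i + 1))
  | (i, true), (j, true) => if j < i then some (pos j, pos (i + 1)) else none
  | (i, false), (j, false) => if i < j then some (neg (j + 1), neg i) else none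
  | (_, true), (_, false) => none

lemma sigmaRule_of_rewritePair_eq_some {a b c d : Letter} (h : rewritePair a b = some (c, d)) :
    SigmaRule [a, b] [c, d] := by
  obtain ⟨i, _ | _⟩ := a <;> obtain ⟨j, _ | _⟩ := b <;> simp only [rewritePair] at h
  · split_ifs at h with hij
    cases h
    exact .negNeg i j hij
  · split_ifs at h with hij hij' <;> cases h
    · subst hij; exact .cancel i
    · exact .negPos i j hij'
    · exact .posNegInv j i (by omega)
  · cases h
  · split_ifs at h with hij
    cases h
    exact .posPos j i hij

lemma not_sigmaRule_of_rewritePair_eq_none {a b : Letter} (h : rewritePair a b = none) (r : Word) :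
    ¬ SigmaRule [a, b] r := by
  intro hr
  cases hr <;> grind [rewritePair, pos, neg]

lemma rewritePair_rhs_eq_none {a b c d : Letter} (h : rewritePair a b = some (c, d)) :
    rewritePair c d = none := by
  obtain ⟨i, _ | _⟩ := a <;> obtain ⟨j, _ | _⟩ := b <;> grind [rewritePair, pos, neg]

/-- After `[a, b] → [c, d]` the letter `d` moves on past `y`; if `b` did not react with `y`, then `c`
does not react with what `y` becomes. -/
lemma rewritePair_eq_none_of_rewritePair_eq_some {a b c d y y' d' : Letter}
    (hab : rewritePair a b = some (c, d)) (hby : rewritePair b y = none)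
    (hdy : rewritePair d y = some (y', d')) : rewritePair c y' = none := by
  obtain ⟨i, _ | _⟩ := a <;> obtain ⟨j, _ | _⟩ := b <;> obtain ⟨k, _ | _⟩ := y <;>
    grind [rewritePair, pos, neg]

def IsNormal (w : Word) : Prop := w.IsChain (fun a b => rewritePair a b = none)

lemma IsNormal.sigmaIrreducible {w : Word} (h : IsNormal w) : SigmaIrreducible w := by
  rintro v ⟨u₁, u₂, l, r, hr, rfl, -⟩
  obtain ⟨a, b, rfl⟩ : ∃ a b : Letter, l = [a, b] := by cases hr <;> exact ⟨_, _, rfl⟩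
  have hw : IsNormal (u₁ ++ a :: b :: u₂) := by simpa using h
  exact not_sigmaRule_of_rewritePair_eq_none (List.isChain_append_cons_cons.mp hw).2.1 r hr

def pushLetter (a : Letter) : Word → Word
  | [] => [a]
  | b :: t =>
    match rewritePair a b with
    | some (c, d) => c :: pushLetter d t
    | none => a :: b :: t

lemma step_cons (x : Letter) {u v : Word} (h : Step u v) : Step (x :: u) (x :: v) := by
  obtain ⟨a, b, l, r, hr, rfl, rfl⟩ := h
  exact ⟨x :: a, b, l, r, hr, rfl, rfl⟩

lemma reflTransGen_step_cons (x : Letter) {u v : Word} (h : Relation.ReflTransGen Step u v) :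
    Relation.ReflTransGen Step (x :: u) (x :: v) :=
  h.lift (x :: ·) fun _ _ => step_cons x

lemma reflTransGen_step_pushLetter (a : Letter) :
    ∀ v : Word, Relation.ReflTransGen Step (a :: v) (pushLetter a v)
  | [] => .refl
  | b :: t => by
    unfold pushLetter
    rcases h : rewritePair a b with _ | ⟨c, d⟩
    · exact .refl
    · have hstep : Step (a :: b :: t) (c :: d :: t) :=
        ⟨[], t, _, _, sigmaRule_of_rewritePair_eq_some h, rfl, rfl⟩
      exact .head hstep (reflTransGen_step_cons c (reflTransGen_step_pushLetter d t))

lemma rewritePair_head_pushLetter {a b c d : Letter} {t : Word}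
    (hab : rewritePair a b = some (c, d)) (hbt : ∀ y ∈ t.head?, rewritePair b y = none) :
    ∀ z ∈ (pushLetter d t).head?, rewritePair c z = none := by
  cases t with
  | nil => simpa [pushLetter] using rewritePair_rhs_eq_none hab
  | cons y t =>
    unfold pushLetter
    rcases hdy : rewritePair d y with _ | ⟨y', d'⟩
    · simpa using rewritePair_rhs_eq_none hab
    · simpa using rewritePair_eq_none_of_rewritePair_eq_some hab (hbt y rfl) hdy

lemma isNormal_pushLetter (a : Letter) : ∀ {v : Word}, IsNormal v → IsNormal (pushLetter a v)
  | [], _ => List.isChain_singleton a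
  | b :: t, hv => by
    unfold pushLetter
    rcases hab : rewritePair a b with _ | ⟨c, d⟩
    · exact List.isChain_cons_cons.mpr ⟨hab, hv⟩
    · have ⟨hbt, ht⟩ := List.isChain_cons.mp hv
      exact List.isChain_cons.mpr
        ⟨rewritePair_head_pushLetter hab hbt, isNormal_pushLetter d ht⟩

def normalForm : Word → Word
  | [] => []
  | a :: w => pushLetter a (normalForm w)

lemma reflTransGen_step_normalForm : ∀ w : Word, Relation.ReflTransGen Step w (normalForm w)
  | [] => .refl
  | a :: w => (reflTransGen_step_cons a (reflTransGen_step_normalForm w)).trans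
      (reflTransGen_step_pushLetter a (normalForm w))

lemma isNormal_normalForm : ∀ w : Word, IsNormal (normalForm w)
  | [] => List.isChain_nil
  | a :: w => isNormal_pushLetter a (isNormal_normalForm w)

/-- The rewriting system Σ is normalizing: every word has an irreducible descendant. -/
theorem sigma_normalizing (w : Word) :
    ∃ r : Word, Relation.ReflTransGen Step w r ∧ SigmaIrreducible r :=
  ⟨normalForm w, reflTransGen_step_normalForm w, (isNormal_normalForm w).sigmaIrreducible⟩
end

section
/- The rewriting system Σ is locally confluent: whenever a word u rewrites in one step to two words v1 and v2 (by overlapping or disjoint rule applications), v1 and v2 have a common descendant under Σ. -/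
open Relation

lemma stepL {x y z : Letter} {r : Word} (h : SigmaRule [x,y] r) : Step [x,y,z] (r ++ [z]) :=
  ⟨[], [z], [x,y], r, h, rfl, rfl⟩

lemma stepR {x y z : Letter} {r : Word} (h : SigmaRule [y,z] r) : Step [x,y,z] (x :: r) :=
  ⟨[x], [], [y,z], r, h, by simp, by simp⟩

lemma crit {x y z : Letter} {r₁ r₂ : Word} (h₁ : SigmaRule [x,y] r₁) (h₂ : SigmaRule [y,z] r₂) :
    ∃ w, ReflTransGen Step (r₁ ++ [z]) w ∧ ReflTransGen Step (x :: r₂) w := by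
  cases h₁ with
  | cancel i =>
    cases h₂ with
    | posPos c _ h =>
      -- A1: [neg i, pos i, pos c], c < i
      exact ⟨_, (ReflTransGen.single (stepR (SigmaRule.posNegInv c i h))).tail
          (stepL (SigmaRule.posPos c i h)),
        (ReflTransGen.single (stepL (SigmaRule.posNegInv c i h))).tail
          (stepR (SigmaRule.cancel (i+1)))⟩
  | negPos a b hab =>
    cases h₂ with
    | posPos c _ h =>
      -- A2: [neg a, pos b, pos c], a<b, c<b
      rcases lt_trichotomy a c with hac | rfl | hca
      · exact ⟨_, (ReflTransGen.single (stepR (SigmaRule.negPos a c hac))).tail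
            (stepL (SigmaRule.posPos (c+1) (b+1) (by omega))),
          (ReflTransGen.single (stepL (SigmaRule.negPos a c hac))).tail
            (stepR (SigmaRule.negPos a (b+1) (by omega)))⟩
      · exact ⟨_, (ReflTransGen.single (stepR (SigmaRule.cancel a))).tail
            (stepL (SigmaRule.posPos a (b+1) (by omega))),
          (ReflTransGen.single (stepL (SigmaRule.cancel a))).tail
            (stepR (SigmaRule.negPos a (b+1) (by omega)))⟩
      · exact ⟨_, (ReflTransGen.single (stepR (SigmaRule.posNegInv c a hca))).tail
            (stepL (SigmaRule.posPos c (b+1) (by omega))),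
          (ReflTransGen.single (stepL (SigmaRule.posNegInv c a hca))).tail
            (stepR (SigmaRule.negPos (a+1) (b+1) (by omega)))⟩
  | posNegInv b a hba =>
    cases h₂ with
    | posPos c _ h =>
      -- A3: [neg a, pos b, pos c], c<b<a
      exact ⟨_, (ReflTransGen.single (stepR (SigmaRule.posNegInv c (a+1) (by omega)))).tail
          (stepL (SigmaRule.posPos c b h)),
        (ReflTransGen.single (stepL (SigmaRule.posNegInv c a (by omega)))).tail
          (stepR (SigmaRule.posNegInv (b+1) (a+1) (by omega)))⟩
  | posPos b a hba =>
    -- x = pos a, y = pos b, b<a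
    cases h₂ with
    | posPos c _ h =>
      -- B: [pos a, pos b, pos c], c<b<a
      exact ⟨_, (ReflTransGen.single (stepR (SigmaRule.posPos c (a+1) (by omega)))).tail
          (stepL (SigmaRule.posPos c b h)),
        (ReflTransGen.single (stepL (SigmaRule.posPos c a (by omega)))).tail
          (stepR (SigmaRule.posPos (b+1) (a+1) (by omega)))⟩
  | negNeg a b hab =>
    -- x = neg a, y = neg b, a<b
    cases h₂ with
    | cancel =>
      -- C1: [neg a, neg b, pos b]
      exact ⟨_, (ReflTransGen.single (stepR (SigmaRule.negPos a b hab))).tail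
          (stepL (SigmaRule.cancel (b+1))),
        (ReflTransGen.single (stepL (SigmaRule.negPos a b hab))).tail
          (stepR (SigmaRule.negNeg a b hab))⟩
    | negPos _ c hbc =>
      -- C2: [neg a, neg b, pos c], a<b<c
      exact ⟨_, (ReflTransGen.single (stepR (SigmaRule.negPos a c (by omega)))).tail
          (stepL (SigmaRule.negPos (b+1) (c+1) (by omega))),
        (ReflTransGen.single (stepL (SigmaRule.negPos a (c+1) (by omega)))).tail
          (stepR (SigmaRule.negNeg a b hab))⟩
    | posNegInv c _ hcb =>
      -- C3: [neg a, neg b, pos c], a<b, c<b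
      rcases lt_trichotomy a c with hac | rfl | hca
      · exact ⟨_, (ReflTransGen.single (stepR (SigmaRule.negPos a c hac))).tail
            (stepL (SigmaRule.posNegInv (c+1) (b+1) (by omega))),
          (ReflTransGen.single (stepL (SigmaRule.negPos a c hac))).tail
            (stepR (SigmaRule.negNeg a (b+1) (by omega)))⟩
      · exact ⟨_, (ReflTransGen.single (stepR (SigmaRule.cancel a))).tail
            (stepL (SigmaRule.posNegInv a (b+1) (by omega))),
          (ReflTransGen.single (stepL (SigmaRule.cancel a))).tail
            (stepR (SigmaRule.negNeg a (b+1) (by omega)))⟩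
      · exact ⟨_, (ReflTransGen.single (stepR (SigmaRule.posNegInv c a hca))).tail
            (stepL (SigmaRule.posNegInv c (b+1) (by omega))),
          (ReflTransGen.single (stepL (SigmaRule.posNegInv c a hca))).tail
            (stepR (SigmaRule.negNeg (a+1) (b+1) (by omega)))⟩
    | negNeg _ c hbc =>
      -- C4: [neg a, neg b, neg c], a<b<c
      exact ⟨_, (ReflTransGen.single (stepR (SigmaRule.negNeg a c (by omega)))).tail
          (stepL (SigmaRule.negNeg (b+1) (c+1) (by omega))),
        (ReflTransGen.single (stepL (SigmaRule.negNeg a (c+1) (by omega)))).tail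
          (stepR (SigmaRule.negNeg a b hab))⟩

lemma step_ctx {u v : Word} (a b : Word) (h : Step u v) : Step (a ++ u ++ b) (a ++ v ++ b) := by
  obtain ⟨a', b', l, r, hr, rfl, rfl⟩ := h
  exact ⟨a ++ a', b' ++ b, l, r, hr, by simp, by simp⟩

lemma rtg_ctx {u v : Word} (a b : Word) (h : ReflTransGen Step u v) :
    ReflTransGen Step (a ++ u ++ b) (a ++ v ++ b) := by
  induction h with
  | refl => exact ReflTransGen.refl
  | tail _ h ih => exact ih.tail (step_ctx a b h)

lemma rule_det {l r₁ r₂ : Word} (h₁ : SigmaRule l r₁) (h₂ : SigmaRule l r₂) : r₁ = r₂ := by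
  cases h₁ <;> cases h₂ <;> simp_all [pos, neg] <;> omega

lemma rule_shape {l r : Word} (h : SigmaRule l r) : ∃ p q, l = [p, q] := by
  cases h <;> exact ⟨_, _, rfl⟩

lemma main_aux (a t b₁ b₂ : Word) {l₁ r₁ l₂ r₂ : Word}
    (h₁ : SigmaRule l₁ r₁) (h₂ : SigmaRule l₂ r₂)
    (heq : l₁ ++ b₁ = t ++ (l₂ ++ b₂)) :
    ∃ w, ReflTransGen Step (a ++ r₁ ++ b₁) w ∧
         ReflTransGen Step ((a ++ t) ++ r₂ ++ b₂) w := by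
  obtain ⟨x, y, rfl⟩ := rule_shape h₁
  obtain ⟨p, q, rfl⟩ := rule_shape h₂
  match t with
  | [] =>
    simp only [List.nil_append] at heq
    obtain ⟨rfl, rfl, rfl⟩ : x = p ∧ y = q ∧ b₁ = b₂ := by
      simpa using heq
    rw [rule_det h₁ h₂]
    exact ⟨_, ReflTransGen.refl, by simp only [List.append_nil]; exact ReflTransGen.refl⟩
  | [t₀] =>
    obtain ⟨rfl, rfl, rfl⟩ : x = t₀ ∧ y = p ∧ b₁ = q :: b₂ := by
      simpa using heq
    obtain ⟨w, c₁, c₂⟩ := crit h₁ h₂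
    refine ⟨a ++ w ++ b₂, ?_, ?_⟩
    · have := rtg_ctx a b₂ c₁
      simpa using this
    · have := rtg_ctx a b₂ c₂
      simpa using this
  | t₀ :: t₁ :: t' =>
    obtain ⟨rfl, rfl, rfl⟩ : x = t₀ ∧ y = t₁ ∧ b₁ = t' ++ ([p, q] ++ b₂) := by
      simpa using heq
    refine ⟨a ++ r₁ ++ (t' ++ (r₂ ++ b₂)), ReflTransGen.single ?_, ReflTransGen.single ?_⟩
    · exact ⟨a ++ r₁ ++ t', b₂, [p, q], r₂, h₂, by simp, by simp⟩
    · exact ⟨a, t' ++ (r₂ ++ b₂), [x, y], r₁, h₁, by simp, by simp⟩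

/-- The rewriting system Σ is locally confluent. -/
theorem sigma_locally_confluent (u v₁ v₂ : Word) (h₁ : Step u v₁) (h₂ : Step u v₂) :
    ∃ w : Word, Relation.ReflTransGen Step v₁ w ∧ Relation.ReflTransGen Step v₂ w := by
  obtain ⟨a₁, b₁, l₁, r₁, hr₁, rfl, rfl⟩ := h₁
  obtain ⟨a₂, b₂, l₂, r₂, hr₂, hu, rfl⟩ := h₂
  rw [List.append_assoc, List.append_assoc, List.append_eq_append_iff] at hu
  rcases hu with ⟨t, rfl, heq⟩ | ⟨t, rfl, heq⟩
  · obtain ⟨w, c₁, c₂⟩ := main_aux a₁ t b₁ b₂ hr₁ hr₂ heq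
    exact ⟨w, c₁, by simpa using c₂⟩
  · obtain ⟨w, c₂, c₁⟩ := main_aux a₂ t b₂ b₁ hr₂ hr₁ heq
    exact ⟨w, by simpa using c₁, c₂⟩
end

section
/- Every Σ-irreducible word over X is of the form p q^{-1}, where p and q are monotone positive words (MP-words), i.e., p = x_{i_1} x_{i_2} ⋯ x_{i_m} with i_1 ≤ i_2 ≤ ⋯ ≤ i_m, and q^{-1} = x_{j_k}^{-1} ⋯ x_{j_1}^{-1} with j_1 ≤ j_2 ≤ ⋯ ≤ j_k. -/
/-!
Irreducibility is a condition on adjacent pairs of letters: a negative letter is never followed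
by a positive one, positive subscripts do not decrease and negative subscripts do not increase.
This relation between letters is transitive, so in an irreducible word it holds between any
letter and every later one, which forces the shape `p q⁻¹`.
-/

def IrreduciblePair : Letter → Letter → Prop
  | (i, true), (j, true) => i ≤ j
  | (_, true), (_, false) => True
  | (_, false), (_, true) => False
  | (i, false), (j, false) => j ≤ i

namespace IrreduciblePair

theorem pos_pos_iff {i j : ℕ} : IrreduciblePair (pos i) (pos j) ↔ i ≤ j := Iff.rfl

theorem not_neg_pos {i j : ℕ} : ¬ IrreduciblePair (neg i) (pos j) := id

theorem neg_neg_iff {i j : ℕ} : IrreduciblePair (neg i) (neg j) ↔ j ≤ i := Iff.rfl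

theorem of_forall_not_sigmaRule {x y : Letter} (h : ∀ r, ¬ SigmaRule [x, y] r) :
    IrreduciblePair x y := by
  obtain ⟨i, _ | _⟩ := x <;> obtain ⟨j, _ | _⟩ := y
  · exact not_lt.1 fun hij => h _ (.negNeg i j hij)
  · rcases lt_trichotomy i j with hij | rfl | hji
    · exact h _ (.negPos i j hij)
    · exact h _ (.cancel i)
    · exact h _ (.posNegInv j i hji)
  · trivial
  · exact not_lt.1 fun hji => h _ (.posPos j i hji)

instance : IsTrans Letter IrreduciblePair where
  trans := by
    rintro ⟨i, _ | _⟩ ⟨j, _ | _⟩ ⟨k, _ | _⟩ hij hjk <;>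
      simp only [IrreduciblePair] at hij hjk ⊢ <;> omega

end IrreduciblePair

theorem SigmaIrreducible.of_cons {x : Letter} {w : Word} (hw : SigmaIrreducible (x :: w)) :
    SigmaIrreducible w := by
  rintro _ ⟨a, b, l, r, hlr, rfl, rfl⟩
  exact hw _ ⟨x :: a, b, l, r, hlr, rfl, rfl⟩

theorem SigmaIrreducible.isChain {w : Word} (hw : SigmaIrreducible w) :
    w.IsChain IrreduciblePair := by
  induction w with
  | nil => exact .nil
  | cons x w ih =>
    cases w with
    | nil => exact .singleton x
    | cons y t =>
      refine List.isChain_cons_cons.2 ⟨.of_forall_not_sigmaRule fun r hr => ?_, ih hw.of_cons⟩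
      exact hw _ ⟨[], t, [x, y], r, hr, rfl, rfl⟩

theorem eq_MP_pair_of_pairwise {w : Word} (hw : w.Pairwise IrreduciblePair) :
    ∃ p q : List ℕ, List.Pairwise (· ≤ ·) p ∧ List.Pairwise (· ≤ ·) q ∧
      w = p.map pos ++ (q.reverse.map neg) := by
  induction hw with
  | nil => exact ⟨[], [], .nil, .nil, rfl⟩
  | @cons x w hx _ ih =>
    obtain ⟨p, q, hp, hq, rfl⟩ := ih
    simp only [List.mem_append, List.mem_map, List.mem_reverse] at hx
    obtain ⟨i, _ | _⟩ := x
    · obtain rfl : p = [] := List.eq_nil_iff_forall_not_mem.2 fun j hj =>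
        IrreduciblePair.not_neg_pos (hx _ (.inl ⟨j, hj, rfl⟩))
      refine ⟨[], q ++ [i], .nil, List.pairwise_append.2 ⟨hq, by simp, ?_⟩, by simp [neg]⟩
      simpa using fun j hj => IrreduciblePair.neg_neg_iff.1 (hx _ (.inr ⟨j, hj, rfl⟩))
    · refine ⟨i :: p, q, List.pairwise_cons.2 ⟨fun j hj => ?_, hp⟩, hq, rfl⟩
      exact IrreduciblePair.pos_pos_iff.1 (hx _ (.inl ⟨j, hj, rfl⟩))

/-- Every Σ-irreducible word has the form `p q⁻¹` where `p`, `q` are MP-words. -/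
theorem irreducible_eq_MP_pair (w : Word) (hw : SigmaIrreducible w) :
    ∃ p q : List ℕ, List.Pairwise (· ≤ ·) p ∧ List.Pairwise (· ≤ ·) q ∧
      w = p.map pos ++ (q.reverse.map neg) :=
  eq_MP_pair_of_pairwise hw.isChain.pairwise
end

section
/- For any word w over {x_0^{±1}, x_1^{±1}} of length n, the standard form of w with respect to Σ is p q^{-1} where p, q are MP-words, |p q^{-1}| = n, and every subscript occurring in p q^{-1} is at most n. -/
/-! Every rule of Σ preserves the length of a word and the invariant that the subscript of each
letter is at most `1` plus the number of positive letters to its left plus the number of negative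
letters to its right. Over `x_0^{±1}, x_1^{±1}` the invariant holds trivially, and in a word of
length `n` the bound is at most `n`. A Σ-irreducible word admits no rule on any two adjacent
letters, which forces it to be positive letters with non-decreasing subscripts followed by negative
letters with non-increasing subscripts. -/

def posCount (w : Word) : ℕ := w.countP (·.2)

def negCount (w : Word) : ℕ := w.countP (!·.2)

@[simp] lemma posCount_append (u v : Word) : posCount (u ++ v) = posCount u + posCount v :=
  List.countP_append ..

@[simp] lemma negCount_append (u v : Word) : negCount (u ++ v) = negCount u + negCount v :=
  List.countP_append ..

/-- Each letter's subscript is at most `k` plus the number of positive letters to its left plus the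
number of negative letters to its right. -/
def SubscriptBound (k : ℕ) : Word → Prop
  | [] => True
  | x :: c => x.1 ≤ k + negCount c ∧ SubscriptBound (k + posCount [x]) c

lemma subscriptBound_append {k : ℕ} {u v : Word} :
    SubscriptBound k (u ++ v) ↔
      SubscriptBound (k + negCount v) u ∧ SubscriptBound (k + posCount u) v := by
  induction u generalizing k with
  | nil => simp [SubscriptBound, posCount]
  | cons x u ih =>
    have hpos : posCount (x :: u) = posCount [x] + posCount u := posCount_append [x] u
    simp only [List.cons_append, SubscriptBound, ih, negCount_append, hpos, and_assoc,
      Nat.add_right_comm k (negCount v), Nat.add_assoc]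

lemma subscriptBound_of_forall_le {k : ℕ} {w : Word} (hw : ∀ x ∈ w, x.1 ≤ k) :
    SubscriptBound k w := by
  induction w generalizing k with
  | nil => trivial
  | cons x w ih =>
    simp only [List.forall_mem_cons] at hw
    exact ⟨hw.1.trans (Nat.le_add_right _ _),
      ih fun y hy => (hw.2 y hy).trans (Nat.le_add_right _ _)⟩

lemma SubscriptBound.lt_of_mem {k : ℕ} {w : Word} (h : SubscriptBound k w) {x : Letter}
    (hx : x ∈ w) : x.1 < k + w.length := by
  induction w generalizing k with
  | nil => simp at hx
  | cons y w ih =>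
    have hneg : negCount w ≤ w.length := List.countP_le_length
    have hpos : posCount [y] ≤ 1 := List.countP_le_length
    rcases List.mem_cons.mp hx with rfl | hx
    · simp only [List.length_cons]; have := h.1; omega
    · have := ih h.2 hx; simp only [List.length_cons]; omega

lemma SigmaRule.posCount_eq {l r : Word} (h : SigmaRule l r) : posCount r = posCount l := by
  cases h <;> simp [posCount, pos, neg]

lemma SigmaRule.negCount_eq {l r : Word} (h : SigmaRule l r) : negCount r = negCount l := by
  cases h <;> simp [negCount, pos, neg]

lemma SigmaRule.length_eq {l r : Word} (h : SigmaRule l r) : r.length = l.length := by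
  cases h <;> rfl

lemma SigmaRule.subscriptBound {l r : Word} (h : SigmaRule l r) {k : ℕ}
    (hl : SubscriptBound k l) : SubscriptBound k r := by
  cases h <;> simp [SubscriptBound, posCount, negCount, pos, neg] at hl ⊢ <;> omega

lemma Step.length_eq {u v : Word} (h : Step u v) : v.length = u.length := by
  obtain ⟨a, b, l, r, hlr, rfl, rfl⟩ := h
  simp [hlr.length_eq]

lemma Step.subscriptBound {u v : Word} (h : Step u v) {k : ℕ} (hu : SubscriptBound k u) :
    SubscriptBound k v := by
  obtain ⟨a, b, l, r, hlr, rfl, rfl⟩ := h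
  simp only [subscriptBound_append, posCount_append, hlr.posCount_eq,
    hlr.negCount_eq] at hu ⊢
  exact ⟨⟨hu.1.1, hlr.subscriptBound hu.1.2⟩, hu.2⟩

lemma length_eq_of_reflTransGen_step {u v : Word} (h : Relation.ReflTransGen Step u v) :
    v.length = u.length := by
  induction h with
  | refl => rfl
  | tail _ hstep ih => exact hstep.length_eq.trans ih

lemma subscriptBound_of_reflTransGen_step {u v : Word} (h : Relation.ReflTransGen Step u v)
    {k : ℕ} (hu : SubscriptBound k u) : SubscriptBound k v := by
  induction h with
  | refl => exact hu
  | tail _ hstep ih => exact hstep.subscriptBound ih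

namespace SigmaIrreducible

lemma of_cons_s6 {x : Letter} {t : Word} (h : SigmaIrreducible (x :: t)) : SigmaIrreducible t :=
  fun v ⟨a, b, l, r, hlr, hu, hv⟩ => h (x :: v) ⟨x :: a, b, l, r, hlr, by simp [hu], by simp [hv]⟩

lemma not_sigmaRule {x y : Letter} {t : Word} (h : SigmaIrreducible (x :: y :: t)) (r : Word) :
    ¬ SigmaRule [x, y] r :=
  fun hr => h (r ++ t) ⟨[], t, [x, y], r, hr, rfl, rfl⟩

lemma le_of_pos_pos {i j : ℕ} {t : Word} (h : SigmaIrreducible (pos i :: pos j :: t)) :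
    i ≤ j :=
  not_lt.mp fun hji => h.not_sigmaRule _ (.posPos j i hji)

lemma le_of_neg_neg {i j : ℕ} {t : Word} (h : SigmaIrreducible (neg i :: neg j :: t)) :
    j ≤ i :=
  not_lt.mp fun hij => h.not_sigmaRule _ (.negNeg i j hij)

lemma not_neg_pos {i j : ℕ} {t : Word} : ¬ SigmaIrreducible (neg i :: pos j :: t) := by
  intro h
  rcases lt_trichotomy i j with hij | rfl | hji
  · exact h.not_sigmaRule _ (.negPos i j hij)
  · exact h.not_sigmaRule _ (.cancel i)
  · exact h.not_sigmaRule _ (.posNegInv j i hji)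

lemma exists_eq_map_pos_append_map_neg {w : Word} (h : SigmaIrreducible w) :
    ∃ p s : List ℕ, p.IsChain (· ≤ ·) ∧ s.IsChain (· ≥ ·) ∧ w = p.map pos ++ s.map neg := by
  induction w with
  | nil => exact ⟨[], [], .nil, .nil, rfl⟩
  | cons x t ih =>
    obtain ⟨p, s, hp, hs, rfl⟩ := ih h.of_cons_s6
    obtain ⟨i, _ | _⟩ := x
    · cases p with
      | cons j p => exact absurd h not_neg_pos
      | nil =>
        refine ⟨[], i :: s, .nil, ?_, rfl⟩
        cases s with
        | nil => exact .singleton i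
        | cons m s => exact List.isChain_cons_cons.mpr ⟨h.le_of_neg_neg, hs⟩
    · refine ⟨i :: p, s, ?_, hs, rfl⟩
      cases p with
      | nil => exact .singleton i
      | cons j p => exact List.isChain_cons_cons.mpr ⟨h.le_of_pos_pos, hp⟩

end SigmaIrreducible

/-- For a word `w` over `{x_0^{±1}, x_1^{±1}}` of length `n`, the standard form of `w`
is `p q⁻¹` with `p`, `q` MP-words, of total length `n`, with all subscripts at most `n`. -/
theorem standard_form_of_word_on_two_letters (w : Word) (hw : ∀ a ∈ w, a.1 ≤ 1)
    (r : Word) (hr : Relation.ReflTransGen Step w r) (hirr : SigmaIrreducible r) :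
    ∃ p q : List ℕ, List.Pairwise (· ≤ ·) p ∧ List.Pairwise (· ≤ ·) q ∧
      r = p.map pos ++ (q.reverse.map neg) ∧
      r.length = w.length ∧
      ∀ a ∈ r, a.1 ≤ w.length := by
  have hlen := length_eq_of_reflTransGen_step hr
  have hbound := subscriptBound_of_reflTransGen_step hr (subscriptBound_of_forall_le hw)
  obtain ⟨p, s, hp, hs, rfl⟩ := hirr.exists_eq_map_pos_append_map_neg
  refine ⟨p, s.reverse, List.isChain_iff_pairwise.mp hp, ?_, by rw [List.reverse_reverse],
    hlen, fun a ha => ?_⟩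
  · exact List.pairwise_reverse.mpr (List.isChain_iff_pairwise.mp hs)
  · have := hbound.lt_of_mem ha
    omega
end

section
/- In the free group on {x_0, x_1}, setting x_{k+1} := x_0^{-k} x_1 x_0^k for k ≥ 1, the relations x_4^{x_1} = x_5, x_5^{x_1} = x_6, and x_6^{x_1} = x_7 are consequences of the two defining relations x_2^{x_1} = x_3 and x_3^{x_1} = x_4 (i.e., they hold in the group ⟨x_0, x_1 | x_2^{x_1} = x_3, x_3^{x_1} = x_4⟩). -/
/-- The generator `x_0` of the free group on two generators. -/
def a : FreeGroup (Fin 2) := FreeGroup.of 0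

/-- The generator `x_1` of the free group on two generators. -/
def b : FreeGroup (Fin 2) := FreeGroup.of 1

/-- `X k = x_{k+1} = x_0^{-k} x_1 x_0^k` in the free group on `x_0, x_1`. -/
def X (k : ℕ) : FreeGroup (Fin 2) := (a ^ k)⁻¹ * b * a ^ k

/-- The two relators of the finite presentation of Thompson's group F:
`x_1⁻¹ x_2 x_1 x_3⁻¹` and `x_1⁻¹ x_3 x_1 x_4⁻¹`. -/
def rels2 : Set (FreeGroup (Fin 2)) :=
  {b⁻¹ * X 1 * b * (X 2)⁻¹, b⁻¹ * X 2 * b * (X 3)⁻¹}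

/-!
Write `y k = a⁻ᵏ b aᵏ` (the paper's `x_{k+1}`), so that `y 0 = b`. Conjugation by `aⁿ` shifts
every index by `n`, so the first relation `y 1 ^ y 0 = y 2` yields `y (n+1) ^ y n = y (n+2)` for all `n`. Now if
`y m ^ b = y (m+1)` and `y (m+1) ^ b = y (m+2)`, then `y m * b = b * y (m+1)`, hence
`y (m+2) ^ b = y (m+1) ^ (y m * b) = y (m+1) ^ (b * y (m+1)) = y (m+2) ^ y (m+1) = y (m+3)`.
Starting from the two defining relations (`m = 1`), induction gives `y k ^ b = y (k+1)` for every
`k ≥ 1`.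
-/

section ConjPow

variable {G H : Type*} [Group G] [Group H]

def conjPow (a b : G) (k : ℕ) : G := (a ^ k)⁻¹ * b * a ^ k

theorem map_conjPow (f : G →* H) (a b : G) (k : ℕ) :
    f (conjPow a b k) = conjPow (f a) (f b) k := by
  simp only [conjPow, map_mul, map_inv, map_pow]

theorem conjPow_add (a b : G) (k j : ℕ) :
    conjPow a b (k + j) = (a ^ k)⁻¹ * conjPow a b j * a ^ k := by
  simp only [conjPow, pow_add]
  group

theorem conjPow_succ_conj_conjPow_of_base {a b : G}
    (h : b⁻¹ * conjPow a b 1 * b = conjPow a b 2) (n : ℕ) :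
    (conjPow a b n)⁻¹ * conjPow a b (n + 1) * conjPow a b n = conjPow a b (n + 2) := by
  have hn : conjPow a b n = (a ^ n)⁻¹ * b * a ^ n := rfl
  calc (conjPow a b n)⁻¹ * conjPow a b (n + 1) * conjPow a b n
      = (a ^ n)⁻¹ * (b⁻¹ * conjPow a b 1 * b) * a ^ n := by
        rw [conjPow_add, hn]; group
    _ = conjPow a b (n + 2) := by rw [h, conjPow_add]

theorem conjPow_add_two_conj_base {a b : G}
    (h : b⁻¹ * conjPow a b 1 * b = conjPow a b 2) {m : ℕ}
    (hm : b⁻¹ * conjPow a b m * b = conjPow a b (m + 1))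
    (hm₁ : b⁻¹ * conjPow a b (m + 1) * b = conjPow a b (m + 2)) :
    b⁻¹ * conjPow a b (m + 2) * b = conjPow a b (m + 3) := by
  have hcomm : conjPow a b m * b = b * conjPow a b (m + 1) := by
    rw [← hm]; group
  calc b⁻¹ * conjPow a b (m + 2) * b
      = (conjPow a b m * b)⁻¹ * conjPow a b (m + 1) * (conjPow a b m * b) := by
        rw [← conjPow_succ_conj_conjPow_of_base h m]; group
    _ = (conjPow a b (m + 1))⁻¹ * (b⁻¹ * conjPow a b (m + 1) * b) * conjPow a b (m + 1) := by
        rw [hcomm]; group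
    _ = conjPow a b (m + 3) := by
        rw [hm₁]; exact conjPow_succ_conj_conjPow_of_base h (m + 1)

theorem conjPow_conj_base_of_two_relations {a b : G}
    (h₁ : b⁻¹ * conjPow a b 1 * b = conjPow a b 2)
    (h₂ : b⁻¹ * conjPow a b 2 * b = conjPow a b 3) {k : ℕ} (hk : 1 ≤ k) :
    b⁻¹ * conjPow a b k * b = conjPow a b (k + 1) := by
  suffices ∀ m, b⁻¹ * conjPow a b (m + 1) * b = conjPow a b (m + 2) ∧
      b⁻¹ * conjPow a b (m + 2) * b = conjPow a b (m + 3) by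
    obtain ⟨m, rfl⟩ := Nat.exists_eq_add_of_le' hk
    exact (this m).1
  intro m
  induction m with
  | zero => exact ⟨h₁, h₂⟩
  | succ m ih => exact ⟨ih.2, conjPow_add_two_conj_base h₁ ih.1 ih.2⟩

end ConjPow

/-- In `⟨x_0, x_1 | x_2^{x_1} = x_3, x_3^{x_1} = x_4⟩`, the relations `x_4^{x_1} = x_5`,
`x_5^{x_1} = x_6`, and `x_6^{x_1} = x_7` hold. -/
theorem higher_relations_consequence :
    ((QuotientGroup.mk (b⁻¹ * X 3 * b) : PresentedGroup rels2) = QuotientGroup.mk (X 4)) ∧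
    ((QuotientGroup.mk (b⁻¹ * X 4 * b) : PresentedGroup rels2) = QuotientGroup.mk (X 5)) ∧
    ((QuotientGroup.mk (b⁻¹ * X 5 * b) : PresentedGroup rels2) = QuotientGroup.mk (X 6)) := by
  let π := PresentedGroup.mk rels2
  have hX (k : ℕ) : π (X k) = conjPow (π a) (π b) k := map_conjPow π a b k
  have hπ (k : ℕ) : π (b⁻¹ * X k * b) = (π b)⁻¹ * conjPow (π a) (π b) k * π b := by
    rw [map_mul, map_mul, map_inv, hX]
  have hrel (k : ℕ) (hk : 1 ≤ k) : π (b⁻¹ * X k * b) = π (X (k + 1)) := by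
    rw [hπ, hX]
    refine conjPow_conj_base_of_two_relations ?_ ?_ hk
    · rw [← hπ, ← hX]
      exact PresentedGroup.mk_eq_mk_of_mul_inv_mem (Or.inl rfl)
    · rw [← hπ, ← hX]
      exact PresentedGroup.mk_eq_mk_of_mul_inv_mem (Or.inr rfl)
  exact ⟨hrel 3 (by norm_num), hrel 4 (by norm_num), hrel 5 (by norm_num)⟩
end

section
/- If t = x_{j_1}^{d_1} ⋯ x_{j_h}^{d_h} is a smooth word of rank j and height m, then the equality x_j^t = x_{j+m} holds in the group presented by P_5 (and hence in Thompson's group F). -/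
/-- Relators of the presentation P_5 : `x_j^{x_i} = x_{j+1}` for `0 < j - i ≤ 5`. -/
def rels5 : Set (FreeGroup ℕ) :=
  { w | ∃ i j : ℕ, i < j ∧ j ≤ i + 5 ∧
      w = (FreeGroup.of i)⁻¹ * FreeGroup.of j * FreeGroup.of i * (FreeGroup.of (j+1))⁻¹ }

/-- The group presented by P_5 (which is Thompson's group F). -/
abbrev G5 := PresentedGroup rels5

/-- The generators of the group presented by P_5. -/
def y (i : ℕ) : G5 := PresentedGroup.of i

/-- The height of a signed word: the sum of its exponents `±1`. `true` encodes `+1`. -/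
def height (t : List (ℕ × Bool)) : ℤ := (t.map fun d => if d.2 then (1 : ℤ) else -1).sum

/-- `t = x_{j_1}^{d_1} ⋯ x_{j_h}^{d_h}` is smooth of rank `j` if for each `i`: when
`d_i = 1`, `j + d_1 + ⋯ + d_{i-1} ∈ {j_i + 1, j_i + 2}`; when `d_i = -1`, it lies in
`{j_i + 2, j_i + 3}`. -/
def SmoothWord (j : ℕ) (t : List (ℕ × Bool)) : Prop :=
  ∀ (i : ℕ) (hi : i < t.length),
    if (t.get ⟨i, hi⟩).2 then
      (j : ℤ) + height (t.take i) = (t.get ⟨i, hi⟩).1 + 1 ∨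
      (j : ℤ) + height (t.take i) = (t.get ⟨i, hi⟩).1 + 2
    else
      (j : ℤ) + height (t.take i) = (t.get ⟨i, hi⟩).1 + 2 ∨
      (j : ℤ) + height (t.take i) = (t.get ⟨i, hi⟩).1 + 3

/-- The element of the group presented by P_5 represented by a signed word. -/
def signedProd (t : List (ℕ × Bool)) : G5 :=
  (t.map fun d => if d.2 then y d.1 else (y d.1)⁻¹).prod

lemma rel5 (i k : ℕ) (h1 : i < k) (h2 : k ≤ i + 5) :
    (y i)⁻¹ * y k * y i = y (k + 1) := by
  have hmem : (FreeGroup.of i)⁻¹ * FreeGroup.of k * FreeGroup.of i *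
      (FreeGroup.of (k+1))⁻¹ ∈ Subgroup.normalClosure rels5 :=
    Subgroup.subset_normalClosure ⟨i, k, h1, h2, rfl⟩
  have h1' : (PresentedGroup.mk rels5) ((FreeGroup.of i)⁻¹ * FreeGroup.of k * FreeGroup.of i *
      (FreeGroup.of (k+1))⁻¹) = 1 := (QuotientGroup.eq_one_iff _).2 hmem
  simp only [map_mul, map_inv] at h1'
  have : (y i)⁻¹ * y k * y i * (y (k+1))⁻¹ = 1 := h1'
  exact mul_inv_eq_one.mp this

lemma height_cons (a : ℕ × Bool) (l : List (ℕ × Bool)) :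
    height (a :: l) = (if a.2 then 1 else -1) + height l := by
  simp [height]

/-- If `t` is a smooth word of rank `j` and height `m`, then `x_j^t = x_{j+m}` in the
group presented by P_5. -/
theorem smooth_word_conjugation (j : ℕ) (t : List (ℕ × Bool)) (h : SmoothWord j t) :
    (signedProd t)⁻¹ * y j * signedProd t = y ((j + height t).toNat) := by
  induction t generalizing j with
  | nil => simp [signedProd, height]
  | cons a tl ih =>
    obtain ⟨k, d⟩ := a
    have h0 := h 0 (by simp)
    simp only [List.get, List.take, height, List.map_nil, List.sum_nil, add_zero] at h0
    -- new rank
    set j' : ℕ := if d then j + 1 else j - 1 with hj'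
    have htl : SmoothWord j' tl := by
      intro i hi
      have := h (i + 1) (by simpa using Nat.succ_lt_succ hi)
      have hget : ((k,d) :: tl).get ⟨i+1, by simpa using Nat.succ_lt_succ hi⟩ = tl.get ⟨i, hi⟩ := rfl
      rw [hget] at this
      have htake : (((k,d) :: tl).take (i+1)) = (k,d) :: tl.take i := rfl
      rw [htake, height_cons] at this
      have hcast : (j' : ℤ) = (j : ℤ) + (if d then 1 else -1) := by
        cases d with
        | true => simp [hj']
        | false =>
          have hj1 : 1 ≤ j := by
            rw [if_neg (show ¬(false = true) by decide)] at h0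
            omega
          simp only [hj', if_neg (by simp : ¬ (false = true))]
          push_cast [Nat.cast_sub hj1]
          ring
      rw [hcast]
      convert this using 2 <;> ring_nf
    have ihtl := ih j' htl
    -- the group element for the head letter
    have hsp : signedProd ((k,d) :: tl) =
        (if d then y k else (y k)⁻¹) * signedProd tl := by
      simp [signedProd]
    have hkey : (if d then y k else (y k)⁻¹)⁻¹ * y j * (if d then y k else (y k)⁻¹) = y j' := by
      cases d with
      | true =>
        rw [if_pos rfl] at h0
        simp only [if_pos rfl]
        have hk : k < j ∧ j ≤ k + 5 := by omega
        have := rel5 k j hk.1 hk.2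
        simpa [hj'] using this
      | false =>
        rw [if_neg (show ¬(false = true) by decide)] at h0
        simp only [if_neg (show ¬(false = true) by decide)]
        have hj2 : 2 ≤ j := by omega
        have hk : k < j - 1 ∧ j - 1 ≤ k + 5 := by omega
        have hrel := rel5 k (j-1) hk.1 hk.2
        have hj1 : j - 1 + 1 = j := by omega
        rw [hj1] at hrel
        have : y (j-1) = y k * y j * (y k)⁻¹ := by
          rw [← hrel]; group
        simp only [hj', if_neg (by simp : ¬ (false = true))]
        rw [this]; group
    have hheight : (j : ℤ) + height ((k,d) :: tl) = (j' : ℤ) + height tl := by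
      rw [height_cons]
      cases d with
      | true => simp [hj']; ring
      | false =>
        have hj1 : 1 ≤ j := by
          rw [if_neg (show ¬(false = true) by decide)] at h0
          omega
        simp only [hj', if_neg (by simp : ¬ (false = true))]
        push_cast [Nat.cast_sub hj1]
        ring
    rw [hsp, mul_inv_rev]
    calc (signedProd tl)⁻¹ * (if d then y k else (y k)⁻¹)⁻¹ * y j *
          ((if d then y k else (y k)⁻¹) * signedProd tl)
        = (signedProd tl)⁻¹ * ((if d then y k else (y k)⁻¹)⁻¹ * y j *
          (if d then y k else (y k)⁻¹)) * signedProd tl := by group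
      _ = (signedProd tl)⁻¹ * y j' * signedProd tl := by rw [hkey]
      _ = y ((j' + height tl).toNat) := ihtl
      _ = y (((j : ℤ) + height ((k,d) :: tl)).toNat) := by rw [hheight]
end
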